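/- arXiv:2205.01869 — 2 statements merged into one kernel-verified Lean document; each statement's English description precedes it below -/
import Mathlib

section
/- Nestedness of optimal portfolios: there exists a sequence of portfolios X_1 ⊂ X_2 ⊂ … ⊂ X_m with |X_h| = h such that each X_h maximizes v(X) over all X ⊆ C with |X| ≤ h. -/
noncomputable def val (f t : ℕ → ℝ) (X : Finset ℕ) : ℝ :=
  ∑ j ∈ X, f j * t j * ∏ i ∈ X.filter (fun i => j < i), (1 - f i)

/-!
For monotone `t`, `val f t X` is the expected best prize of the portfolio `X`, and peeling off the
largest index gives `val (insert c X) = f c * t c + (1 - f c) * val X`. We induct on the ground set,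
adding its largest element `e`: an optimal portfolio of size `h + 1` is then either the old optimum
`Y (h + 1)` or `insert e (Y h)`. The heart of the matter is an exchange inequality: if adding `x` to
`R` gains no more than adding `e`, then the same holds for `insert a R`. Hence once `e` wins at some
size it wins at all larger sizes, and switching from `Y (h + 1)` to `insert e (Y h)` at the first
such size keeps the chain nested. The exchange inequality is proved by induction on `R`: an element
of `R` above `a` and `x` can be peeled off at the cost of rescaling the prize `t e`.
-/

open Finset hiding val

section

variable {f t : ℕ → ℝ}

@[simp]
theorem val_empty : val f t ∅ = 0 := by simp [val]

theorem val_insert_of_forall_lt {X : Finset ℕ} {c : ℕ} (hX : ∀ i ∈ X, i < c) :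
    val f t (insert c X) = f c * t c + (1 - f c) * val f t X := by
  have hcX : c ∉ X := fun h => (hX c h).false
  have htop : (insert c X).filter (c < ·) = ∅ :=
    filter_eq_empty_iff.2 fun i hi => by
      rcases mem_insert.1 hi with rfl | hi
      · exact lt_irrefl i
      · exact (hX i hi).not_gt
  have hbelow : ∀ j ∈ X, (insert c X).filter (j < ·) = insert c (X.filter (j < ·)) :=
    fun j hj => by rw [filter_insert, if_pos (hX j hj)]
  rw [val, sum_insert hcX, htop, prod_empty, mul_one, val, mul_sum]
  congr 1
  refine sum_congr rfl fun j hj => ?_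
  rw [hbelow j hj, prod_insert fun h => hcX (mem_filter.1 h).1]
  ring

theorem val_le_of_forall_le {X : Finset ℕ} {τ : ℝ} (hf : ∀ j ∈ X, 0 ≤ f j ∧ f j ≤ 1)
    (hτ : 0 ≤ τ) (ht : ∀ j ∈ X, t j ≤ τ) : val f t X ≤ τ := by
  induction X using Finset.induction_on_max with
  | empty => simpa using hτ
  | insert c X hc ih =>
    rw [val_insert_of_forall_lt hc]
    have hX : val f t X ≤ τ :=
      ih (fun j hj => hf j (mem_insert_of_mem hj)) (fun j hj => ht j (mem_insert_of_mem hj))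
    obtain ⟨hfc₀, hfc₁⟩ := hf c (mem_insert_self c X)
    nlinarith [ht c (mem_insert_self c X)]

theorem val_le_val_insert (hmono : Monotone t) {X : Finset ℕ} {b : ℕ}
    (hf : ∀ j ∈ insert b X, 0 ≤ f j ∧ f j ≤ 1) (ht : ∀ j ∈ insert b X, 0 ≤ t j) :
    val f t X ≤ val f t (insert b X) := by
  induction X using Finset.induction_on_max with
  | empty =>
    rw [val_insert_of_forall_lt (by simp), val_empty]
    nlinarith [hf b (mem_insert_self b ∅), ht b (mem_insert_self b ∅)]
  | insert c X hc ih =>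
    obtain ⟨hfc₀, hfc₁⟩ := hf c (by simp)
    rcases lt_trichotomy b c with hbc | rfl | hcb
    · have hbX : ∀ i ∈ insert b X, i < c := by
        simpa [hbc] using hc
      rw [insert_comm, val_insert_of_forall_lt hbX, val_insert_of_forall_lt hc]
      have hsub : insert b X ⊆ insert b (insert c X) := insert_subset_insert _ (subset_insert _ _)
      have := ih (fun j hj => hf j (hsub hj)) (fun j hj => ht j (hsub hj))
      nlinarith
    · rw [insert_idem]
    · have hcX : ∀ i ∈ insert c X, i < b := by
        simpa [hcb] using fun i hi => (hc i hi).trans hcb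
      rw [val_insert_of_forall_lt hcX]
      have hle : val f t (insert c X) ≤ t b :=
        val_le_of_forall_le (fun j hj => hf j (mem_insert_of_mem hj)) (ht b (mem_insert_self b _))
          fun j hj => hmono (hcX j hj).le
      obtain ⟨hfb₀, hfb₁⟩ := hf b (mem_insert_self b _)
      nlinarith

section Exchange

variable {φ τ : ℝ} {a x : ℕ} {R : Finset ℕ}

theorem val_insert_insert_le_of_forall_lt_left (hφ : 0 ≤ φ) (hfa : 0 ≤ f a ∧ f a ≤ 1)
    (hta : t a ≤ τ) (hlt : ∀ i ∈ insert x R, i < a)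
    (hx : val f t (insert x R) ≤ φ * τ + (1 - φ) * val f t R) :
    val f t (insert x (insert a R)) ≤ φ * τ + (1 - φ) * val f t (insert a R) := by
  rw [insert_comm, val_insert_of_forall_lt hlt,
    val_insert_of_forall_lt fun i hi => hlt i (mem_insert_of_mem hi)]
  nlinarith [mul_le_mul_of_nonneg_left hx (sub_nonneg.2 hfa.2),
    mul_nonneg (mul_nonneg hφ hfa.1) (sub_nonneg.2 hta)]

theorem val_insert_insert_le_of_forall_lt_right (hmono : Monotone t)
    (hf : ∀ j ∈ insert x (insert a R), 0 ≤ f j ∧ f j ≤ 1)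
    (ht : ∀ j ∈ insert x (insert a R), 0 ≤ t j ∧ t j ≤ τ) (hlt : ∀ i ∈ insert a R, i < x)
    (hx : val f t (insert x R) ≤ φ * τ + (1 - φ) * val f t R) :
    val f t (insert x (insert a R)) ≤ φ * τ + (1 - φ) * val f t (insert a R) := by
  have hsub : insert a R ⊆ insert x (insert a R) := subset_insert _ _
  rw [val_insert_of_forall_lt hlt]
  rw [val_insert_of_forall_lt fun i hi => hlt i (mem_insert_of_mem hi)] at hx
  have hRA : val f t R ≤ val f t (insert a R) :=
    val_le_val_insert hmono (fun j hj => hf j (hsub hj)) fun j hj => (ht j (hsub hj)).1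
  have hAτ : val f t (insert a R) ≤ τ :=
    val_le_of_forall_le (fun j hj => hf j (hsub hj)) ((ht a (by simp)).1.trans (ht a (by simp)).2)
      fun j hj => (ht j (hsub hj)).2
  obtain ⟨hfx₀, hfx₁⟩ := hf x (mem_insert_self _ _)
  have htx := (ht x (mem_insert_self _ _)).2
  -- the slack `φ τ + (1 - φ) y - (f x t x + (1 - f x) y)` is affine in `y`, nonnegative at
  -- `y = val R` by `hx` and at `y = τ`, hence at `y = val (insert a R)`
  rcases le_total φ (f x) with hφx | hφx
  · nlinarith [mul_nonneg (sub_nonneg.2 hφx) (sub_nonneg.2 hRA)]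
  · nlinarith [mul_nonneg (sub_nonneg.2 hφx) (sub_nonneg.2 hAτ),
      mul_nonneg hfx₀ (sub_nonneg.2 htx)]

theorem val_insert_insert_le_of_forall_lt_max (hmono : Monotone t) (hφ : 0 ≤ φ)
    (hf : ∀ j ∈ insert x (insert a R), 0 ≤ f j ∧ f j ≤ 1)
    (ht : ∀ j ∈ insert x (insert a R), 0 ≤ t j ∧ t j ≤ τ) (hax : a ≠ x)
    (hlt : ∀ i ∈ R, i < max a x)
    (hx : val f t (insert x R) ≤ φ * τ + (1 - φ) * val f t R) :
    val f t (insert x (insert a R)) ≤ φ * τ + (1 - φ) * val f t (insert a R) := by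
  rcases hax.lt_or_gt with hax | hxa
  · refine val_insert_insert_le_of_forall_lt_right hmono hf ht (fun i hi => ?_) hx
    rcases mem_insert.1 hi with rfl | hi
    · exact hax
    · simpa [hax.le] using hlt i hi
  · refine val_insert_insert_le_of_forall_lt_left hφ (hf a (by simp)) (ht a (by simp)).2
      (fun i hi => ?_) hx
    rcases mem_insert.1 hi with rfl | hi
    · exact hxa
    · simpa [hxa.le] using hlt i hi

theorem val_insert_insert_insert_le_of_forall_lt {c : ℕ} (hφ : 0 ≤ φ) (hfc : 0 ≤ f c ∧ f c ≤ 1)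
    (htc : t c ≤ τ) (hlt : ∀ i ∈ insert x (insert a R), i < c)
    (ih : ∀ τ' ≥ τ, val f t (insert x R) ≤ φ * τ' + (1 - φ) * val f t R →
      val f t (insert x (insert a R)) ≤ φ * τ' + (1 - φ) * val f t (insert a R))
    (hx : val f t (insert x (insert c R)) ≤ φ * τ + (1 - φ) * val f t (insert c R)) :
    val f t (insert x (insert a (insert c R))) ≤
      φ * τ + (1 - φ) * val f t (insert a (insert c R)) := by
  have hsub : insert x R ⊆ insert x (insert a R) := insert_subset_insert _ (subset_insert _ _)
  have hR : ∀ i ∈ R, i < c := fun i hi => hlt i (by simp [hi])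
  rw [insert_comm x c, val_insert_of_forall_lt fun i hi => hlt i (hsub hi),
    val_insert_of_forall_lt hR] at hx
  rw [insert_comm a c, insert_comm x c, val_insert_of_forall_lt hlt,
    val_insert_of_forall_lt fun i hi => hlt i (mem_insert_of_mem hi)]
  rcases hfc.2.lt_or_eq with hfc₁ | hfc₁
  · -- rescaling the prize `τ` turns the hypothesis and the goal into those for `R`
    have hq : 0 < 1 - f c := sub_pos.2 hfc₁
    obtain ⟨τ', hτ'⟩ : ∃ τ', (1 - f c) * τ' = τ - f c * t c := ⟨_, mul_div_cancel₀ _ hq.ne'⟩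
    have hττ' : τ ≤ τ' :=
      le_of_mul_le_mul_left (by nlinarith [mul_le_mul_of_nonneg_left htc hfc.1]) hq
    have hxR : val f t (insert x R) ≤ φ * τ' + (1 - φ) * val f t R :=
      le_of_mul_le_mul_left (by linear_combination hx - φ * hτ') hq
    linear_combination (1 - f c) * ih τ' hττ' hxR + φ * hτ'
  · rw [hfc₁]
    nlinarith [mul_le_mul_of_nonneg_left htc hφ]

theorem val_insert_insert_le (hmono : Monotone t) (hφ : 0 ≤ φ)
    (hf : ∀ j ∈ insert x (insert a R), 0 ≤ f j ∧ f j ≤ 1)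
    (ht : ∀ j ∈ insert x (insert a R), 0 ≤ t j ∧ t j ≤ τ) (hax : a ≠ x) (haR : a ∉ R)
    (hxR : x ∉ R) (hx : val f t (insert x R) ≤ φ * τ + (1 - φ) * val f t R) :
    val f t (insert x (insert a R)) ≤ φ * τ + (1 - φ) * val f t (insert a R) := by
  induction R using Finset.induction_on_max generalizing τ with
  | empty => exact val_insert_insert_le_of_forall_lt_max hmono hφ hf ht hax (by simp) hx
  | insert c R hc ih =>
    have hsub : insert x (insert a R) ⊆ insert x (insert a (insert c R)) :=
      insert_subset_insert _ (insert_subset_insert _ (subset_insert _ _))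
    have hca : c ≠ a := fun h => haR (h ▸ mem_insert_self c R)
    have hcx : c ≠ x := fun h => hxR (h ▸ mem_insert_self c R)
    by_cases hac : a < c ∧ x < c
    · refine val_insert_insert_insert_le_of_forall_lt hφ (hf c (by simp)) (ht c (by simp)).2
        (fun i hi => ?_) (fun τ' hττ' => ih (fun j hj => hf j (hsub hj))
          (fun j hj => ⟨(ht j (hsub hj)).1, (ht j (hsub hj)).2.trans hττ'⟩)
          (fun h => haR (mem_insert_of_mem h)) (fun h => hxR (mem_insert_of_mem h))) hx
      rcases mem_insert.1 hi with rfl | hi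
      · exact hac.2
      rcases mem_insert.1 hi with rfl | hi
      · exact hac.1
      · exact hc i hi
    · have hc_lt : c < max a x := by
        rw [not_and_or, not_lt, not_lt] at hac
        rcases hac with hac | hac
        · exact lt_max_of_lt_left (hac.lt_of_ne hca)
        · exact lt_max_of_lt_right (hac.lt_of_ne hcx)
      refine val_insert_insert_le_of_forall_lt_max hmono hφ hf ht hax (fun i hi => ?_) hx
      rcases mem_insert.1 hi with rfl | hi
      · exact hc_lt
      · exact (hc i hi).trans hc_lt

end Exchange

structure IsOptimalChain (f t : ℕ → ℝ) (U : Finset ℕ) (Y : ℕ → Finset ℕ) : Prop where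
  mono : Monotone Y
  subset : ∀ h, Y h ⊆ U
  card : ∀ h, #(Y h) = min h #U
  val_le : ∀ h, ∀ S ⊆ U, #S ≤ h → val f t S ≤ val f t (Y h)

noncomputable def extendChain (f t : ℕ → ℝ) (Y : ℕ → Finset ℕ) (e : ℕ) : ℕ → Finset ℕ
  | 0 => Y 0
  | h + 1 => if val f t (Y (h + 1)) ≤ val f t (insert e (Y h)) then insert e (Y h) else Y (h + 1)

namespace IsOptimalChain

variable {U : Finset ℕ} {Y : ℕ → Finset ℕ} {e : ℕ}

theorem eq_of_card_le (hY : IsOptimalChain f t U Y) {h : ℕ} (hU : #U ≤ h) : Y h = U :=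
  eq_of_subset_of_card_le (hY.subset h) (by rw [hY.card, min_eq_right hU])

theorem exists_eq_insert (hY : IsOptimalChain f t U Y) {h : ℕ} (hU : h < #U) :
    ∃ a ∉ Y h, insert a (Y h) = Y (h + 1) :=
  exists_eq_insert_iff.2 ⟨hY.mono h.le_succ, by rw [hY.card, hY.card]; omega⟩

theorem val_insert (hY : IsOptimalChain f t U Y) (he : ∀ i ∈ U, i < e) (h : ℕ) :
    val f t (insert e (Y h)) = f e * t e + (1 - f e) * val f t (Y h) :=
  val_insert_of_forall_lt fun i hi => he i (hY.subset h hi)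

theorem val_le_max (hY : IsOptimalChain f t U Y) (he : ∀ i ∈ U, i < e) (hfe : f e ≤ 1) {h : ℕ}
    {S : Finset ℕ} (hS : S ⊆ insert e U) (hcard : #S ≤ h + 1) :
    val f t S ≤ max (val f t (Y (h + 1))) (val f t (insert e (Y h))) := by
  by_cases heS : e ∈ S
  · have hSU : S.erase e ⊆ U := subset_insert_iff.1 hS
    refine le_max_of_le_right ?_
    rw [← insert_erase heS, val_insert_of_forall_lt fun i hi => he i (hSU hi), hY.val_insert he]
    have hle := hY.val_le h _ hSU (by rw [card_erase_of_mem heS]; omega)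
    gcongr
  · exact le_max_of_le_left (hY.val_le _ _ ((subset_insert_iff_of_notMem heS).1 hS) hcard)

variable (hmono : Monotone t) (hf : ∀ j ∈ insert e U, 0 ≤ f j ∧ f j ≤ 1)
  (ht : ∀ j ∈ insert e U, 0 ≤ t j)
include hmono hf ht

theorem val_le_val_insert_of_card_le (hY : IsOptimalChain f t U Y) {h : ℕ} (hU : #U ≤ h) :
    val f t (Y (h + 1)) ≤ val f t (insert e (Y h)) := by
  rw [hY.eq_of_card_le (by omega : #U ≤ h + 1), hY.eq_of_card_le hU]
  exact val_le_val_insert hmono hf ht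

theorem monotone_val_le_val_insert (hY : IsOptimalChain f t U Y) (he : ∀ i ∈ U, i < e) :
    Monotone fun h => val f t (Y (h + 1)) ≤ val f t (insert e (Y h)) := by
  refine monotone_nat_of_le_succ fun h hwin => ?_
  rcases le_or_gt #U (h + 1) with hU | hU
  · exact val_le_val_insert_of_card_le hmono hf ht hY hU
  obtain ⟨a, haY, hYa⟩ := hY.exists_eq_insert (by omega : h < #U)
  obtain ⟨x, hxY, hYx⟩ := hY.exists_eq_insert hU
  have hxY' : x ∉ Y h := fun hx => hxY (hY.mono h.le_succ hx)
  have hax : a ≠ x := by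
    rintro rfl
    exact hxY (hYa ▸ mem_insert_self a _)
  have hsub : insert x (insert a (Y h)) ⊆ U := by
    rw [hYa, hYx]
    exact hY.subset _
  have hx : val f t (insert x (Y h)) ≤ f e * t e + (1 - f e) * val f t (Y h) :=
    calc val f t (insert x (Y h))
        ≤ val f t (Y (h + 1)) := by
          refine hY.val_le _ _ ((insert_subset_insert _ (subset_insert _ _)).trans hsub) ?_
          rw [card_insert_of_notMem hxY', hY.card, min_eq_left (by omega)]
      _ ≤ val f t (insert e (Y h)) := hwin
      _ = f e * t e + (1 - f e) * val f t (Y h) := hY.val_insert he h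
  have key := val_insert_insert_le hmono (hf e (mem_insert_self e U)).1
    (fun j hj => hf j (mem_insert_of_mem (hsub hj)))
    (fun j hj => ⟨ht j (mem_insert_of_mem (hsub hj)), hmono (he j (hsub hj)).le⟩) hax haY hxY' hx
  rwa [hYa, hYx, ← hY.val_insert he] at key

theorem extend (hY : IsOptimalChain f t U Y) (he : ∀ i ∈ U, i < e) :
    IsOptimalChain f t (insert e U) (extendChain f t Y e) where
  mono := by
    have hwin := monotone_val_le_val_insert hmono hf ht hY he
    refine monotone_nat_of_le_succ fun h => ?_
    cases h with
    | zero =>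
      simp only [extendChain]
      split_ifs
      exacts [subset_insert _ _, hY.mono (Nat.zero_le 1)]
    | succ h =>
      simp only [extendChain]
      split_ifs with h₁ h₂ h₂
      · exact insert_subset_insert _ (hY.mono h.le_succ)
      · exact absurd (hwin h.le_succ h₁) h₂
      · exact subset_insert _ _
      · exact hY.mono (h + 1).le_succ
  subset h := by
    cases h with
    | zero => exact (hY.subset 0).trans (subset_insert _ _)
    | succ h =>
      simp only [extendChain]
      split_ifs
      exacts [insert_subset_insert _ (hY.subset h), (hY.subset _).trans (subset_insert _ _)]
  card h := by
    have heU : e ∉ U := fun h => (he e h).false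
    cases h with
    | zero => simp [extendChain, hY.card]
    | succ h =>
      simp only [extendChain]
      split_ifs with hw
      · rw [card_insert_of_notMem fun h' => heU (hY.subset h h'), hY.card,
          card_insert_of_notMem heU, min_add_add_right]
      · have hU : h < #U := by
          by_contra hU
          exact hw (val_le_val_insert_of_card_le hmono hf ht hY (not_lt.1 hU))
        rw [hY.card, card_insert_of_notMem heU, min_eq_left (by omega), min_eq_left (by omega)]
  val_le h S hS hcard := by
    cases h with
    | zero =>
      obtain rfl : S = ∅ := card_eq_zero.1 (Nat.le_zero.1 hcard)
      exact hY.val_le 0 ∅ (empty_subset _) le_rfl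
    | succ h =>
      refine (hY.val_le_max he (hf e (mem_insert_self e U)).2 hS hcard).trans ?_
      simp only [extendChain]
      split_ifs with hw
      · exact max_le hw le_rfl
      · exact max_le le_rfl (not_le.1 hw).le

end IsOptimalChain

theorem exists_isOptimalChain (hmono : Monotone t) {U : Finset ℕ}
    (hf : ∀ j ∈ U, 0 ≤ f j ∧ f j ≤ 1) (ht : ∀ j ∈ U, 0 ≤ t j) :
    ∃ Y, IsOptimalChain f t U Y := by
  induction U using Finset.induction_on_max with
  | empty => exact ⟨fun _ => ∅, monotone_const, fun _ => subset_rfl, by simp, by simp⟩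
  | insert e U he ih =>
    obtain ⟨Y, hY⟩ := ih (fun j hj => hf j (mem_insert_of_mem hj))
      fun j hj => ht j (mem_insert_of_mem hj)
    exact ⟨_, hY.extend hmono hf ht he⟩

end

theorem stmt_12_general (m : ℕ) (f t : ℕ → ℝ)
    (hf : ∀ j ∈ Finset.Icc 1 m, 0 < f j ∧ f j ≤ 1)
    (ht : ∀ j ∈ Finset.Icc 1 m, 0 ≤ t j) (hmono : Monotone t) :
    ∃ X : ℕ → Finset ℕ,
      (∀ h, 1 ≤ h → h ≤ m → (X h).card = h ∧ X h ⊆ Finset.Icc 1 m ∧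
        ∀ S ⊆ Finset.Icc 1 m, S.card ≤ h → val f t S ≤ val f t (X h)) ∧
      (∀ h, 1 ≤ h → h < m → X h ⊂ X (h + 1)) := by
  obtain ⟨Y, hY⟩ := exists_isOptimalChain hmono (fun j hj => ⟨(hf j hj).1.le, (hf j hj).2⟩) ht
  have hcard : ∀ h ≤ m, #(Y h) = h := fun h hh => by
    rw [hY.card, Nat.card_Icc, min_eq_left (by omega)]
  refine ⟨Y, fun h _ hh => ⟨hcard h hh, hY.subset h, hY.val_le h⟩, fun h _ hh => ?_⟩
  refine (hY.mono h.le_succ).ssubset_of_ne fun heq => ?_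
  have := hcard (h + 1) hh
  rw [← heq, hcard h hh.le] at this
  omega

/-- nestedness of optimal application portfolios. -/
theorem stmt_12 (m : ℕ) (f t : ℕ → ℝ) (hm : 1 ≤ m)
    (hf : ∀ j ∈ Finset.Icc 1 m, 0 < f j ∧ f j ≤ 1)
    (ht : ∀ j ∈ Finset.Icc 1 m, 0 ≤ t j) (hmono : Monotone t) :
    ∃ X : ℕ → Finset ℕ,
      (∀ h, 1 ≤ h → h ≤ m → (X h).card = h ∧ X h ⊆ Finset.Icc 1 m ∧
        ∀ S ⊆ Finset.Icc 1 m, S.card ≤ h → val f t S ≤ val f t (X h)) ∧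
      (∀ h, 1 ≤ h → h < m → X h ⊂ X (h + 1)) :=
  stmt_12_general m f t hf ht hmono
end

section
/- Bellman recursion validity for the expenditure dynamic program: defining V[j, h] as the maximum of v(X) over X ⊆ {1,…,j} with ∑_{i∈X} g_i ≤ h (with V[j,h] = −∞ for h < 0 and V[0,h] = V[j,0] = 0), one has V[j, h] = max{V[j−1, h], (1 − f_j) V[j−1, h − g_j] + f_j t_j} for all 1 ≤ j ≤ m and 1 ≤ h ≤ H, where schools are indexed in ascending order of t_j. -/
lemma val_insert (f t : ℕ → ℝ) (j : ℕ) (X : Finset ℕ) (hj : ∀ i ∈ X, i < j) :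
    val f t (insert j X) = (1 - f j) * val f t X + f j * t j := by
  have hjX : j ∉ X := fun h => lt_irrefl j (hj j h)
  unfold val
  rw [Finset.sum_insert hjX]
  have h1 : (insert j X).filter (fun i => j < i) = ∅ := by
    apply Finset.filter_false_of_mem
    intro i hi
    simp only [Finset.mem_insert] at hi
    rcases hi with rfl | hi
    · exact lt_irrefl i
    · exact fun h => absurd (hj i hi) (not_lt.2 h.le)
  rw [h1]
  simp only [Finset.prod_empty, mul_one]
  have h2 : ∀ i ∈ X,
      f i * t i * ∏ k ∈ (insert j X).filter (fun k => i < k), (1 - f k)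
        = (1 - f j) * (f i * t i * ∏ k ∈ X.filter (fun k => i < k), (1 - f k)) := by
    intro i hi
    rw [Finset.filter_insert, if_pos (hj i hi),
      Finset.prod_insert (by simp [hjX])]
    ring
  rw [Finset.sum_congr rfl h2, ← Finset.mul_sum]
  ring

/-- validity of the Bellman recursion for the expenditure DP. -/
theorem stmt_17 (m H : ℕ) (f t : ℕ → ℝ) (g : ℕ → ℕ) (V : ℕ → ℕ → ℝ)
    (hf : ∀ j, 0 < f j ∧ f j ≤ 1) (ht : ∀ j, 0 ≤ t j) (hmono : Monotone t)
    (hV : ∀ j h, IsGreatest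
        {v | ∃ X ⊆ Finset.Icc 1 j, (∑ i ∈ X, g i) ≤ h ∧ val f t X = v} (V j h)) :
    ∀ j h, 1 ≤ j → j ≤ m → 1 ≤ h → h ≤ H →
      V j h = if g j ≤ h then
          max (V (j - 1) h) ((1 - f j) * V (j - 1) (h - g j) + f j * t j)
        else V (j - 1) h := by
  intro j h hj1 _ _ _
  have hfj1 : (0:ℝ) ≤ 1 - f j := by linarith [(hf j).2]
  -- V (j-1) h ≤ V j h
  have hsub : Finset.Icc 1 (j-1) ⊆ Finset.Icc 1 j := by
    apply Finset.Icc_subset_Icc le_rfl (Nat.sub_le j 1)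
  have hlt : ∀ i ∈ Finset.Icc 1 (j-1), i < j := by
    intro i hi
    exact lt_of_le_of_lt (Finset.mem_Icc.1 hi).2 (Nat.sub_lt hj1 one_pos)
  have hle1 : V (j-1) h ≤ V j h := by
    obtain ⟨X, hXs, hXc, hXv⟩ := (hV (j-1) h).1
    exact (hV j h).2 ⟨X, hXs.trans hsub, hXc, hXv⟩
  -- second candidate ≤ V j h when affordable
  have hle2 : g j ≤ h → (1 - f j) * V (j-1) (h - g j) + f j * t j ≤ V j h := by
    intro hg
    obtain ⟨X, hXs, hXc, hXv⟩ := (hV (j-1) (h - g j)).1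
    have hjX : j ∉ X := fun hc => lt_irrefl j (hlt j (hXs hc))
    have hcost : ∑ i ∈ insert j X, g i ≤ h := by
      rw [Finset.sum_insert hjX]
      omega
    have hval : val f t (insert j X) = (1 - f j) * V (j-1) (h - g j) + f j * t j := by
      rw [val_insert f t j X (fun i hi => hlt i (hXs hi)), hXv]
    refine (hV j h).2 ⟨insert j X, ?_, hcost, hval⟩
    exact Finset.insert_subset (Finset.mem_Icc.2 ⟨hj1, le_rfl⟩) (hXs.trans hsub)
  -- upper bound
  obtain ⟨⟨X, hXs, hXc, hXv⟩, _⟩ := hV j h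
  by_cases hjX : j ∈ X
  · have hg : g j ≤ h := le_trans (Finset.single_le_sum (fun i _ => Nat.zero_le _) hjX) hXc
    rw [if_pos hg]
    apply le_antisymm _ (max_le hle1 (hle2 hg))
    -- V j h = val X ≤ second candidate
    set Y := X.erase j with hY
    have hYlt : ∀ i ∈ Y, i < j := by
      intro i hi
      have h1 := Finset.mem_Icc.1 (hXs (Finset.mem_of_mem_erase hi))
      have h2 := Finset.ne_of_mem_erase hi
      omega
    have hXY : X = insert j Y := by rw [hY, Finset.insert_erase hjX]
    have hYs : Y ⊆ Finset.Icc 1 (j-1) := by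
      intro i hi
      have h1 := Finset.mem_Icc.1 (hXs (Finset.mem_of_mem_erase hi))
      have := hYlt i hi
      exact Finset.mem_Icc.2 ⟨h1.1, by omega⟩
    have hYc : ∑ i ∈ Y, g i ≤ h - g j := by
      have : ∑ i ∈ Y, g i + g j = ∑ i ∈ X, g i := Finset.sum_erase_add X g hjX
      omega
    have hYle : val f t Y ≤ V (j-1) (h - g j) := (hV (j-1) (h - g j)).2 ⟨Y, hYs, hYc, rfl⟩
    calc V j h = val f t X := hXv.symm
      _ = (1 - f j) * val f t Y + f j * t j := by rw [hXY, val_insert f t j Y hYlt]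
      _ ≤ (1 - f j) * V (j-1) (h - g j) + f j * t j := by nlinarith
      _ ≤ _ := le_max_right _ _
  · have hXs' : X ⊆ Finset.Icc 1 (j-1) := by
      intro i hi
      have h1 := Finset.mem_Icc.1 (hXs hi)
      have : i ≠ j := fun hc => hjX (hc ▸ hi)
      exact Finset.mem_Icc.2 ⟨h1.1, by omega⟩
    have hup : V j h ≤ V (j-1) h := by
      rw [← hXv]
      exact (hV (j-1) h).2 ⟨X, hXs', hXc, rfl⟩
    by_cases hg : g j ≤ h
    · rw [if_pos hg]
      exact le_antisymm (le_max_iff.2 (Or.inl hup))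
        (max_le hle1 (hle2 hg))
    · rw [if_neg hg]
      exact le_antisymm hup hle1
end
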